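/- One has κ_{1/2} = 2 (so that 1 − (1/2)·κ_{1/2} = 0); moreover 1 − ν·κ_ν > 0 for every ν with 0 < ν < 1/2, and 1 − ν·κ_ν < 0 for every ν with 1/2 < ν < 1. -/

import Mathlib

open MeasureTheory

/-- `κ_ν = ∫_1^∞ ((v+1)^{2ν} − v^{2ν})/v^{ν+1} dv`. -/
noncomputable def kappa (ν : ℝ) : ℝ :=
  ∫ v in Set.Ici (1 : ℝ), ((v + 1) ^ (2 * ν) - v ^ (2 * ν)) / v ^ (ν + 1)

/-!
Bernoulli's inequality compares `(v+1)^(2ν) - v^(2ν)` with `2ν v^(2ν-1)`: the difference is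
smaller for `2ν ≤ 1` and larger for `2ν ≥ 1`. Dividing by `v^(ν+1)` and integrating `2ν v^(ν-2)`
over `[1, ∞)` gives `κ_ν ≤ 2ν/(1-ν)` for `ν ≤ 1/2` and `κ_ν ≥ 2ν/(1-ν)` for `ν ≥ 1/2`, hence
`κ_{1/2} = 2`; finally `1 - ν · 2ν/(1-ν) = (1-2ν)(1+ν)/(1-ν)` has the sign of `1 - 2ν`.
-/

open Real Set

namespace Real

lemma rpow_add_one_eq_mul_rpow_one_add_inv {v : ℝ} (hv : 0 < v) (p : ℝ) :
    (v + 1) ^ p = v ^ p * (1 + v⁻¹) ^ p := by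
  rw [← mul_rpow hv.le (by positivity), mul_add, mul_inv_cancel₀ hv.ne', mul_one]

lemma rpow_mul_inv {v : ℝ} (hv : 0 < v) (p : ℝ) : v ^ p * v⁻¹ = v ^ (p - 1) := by
  rw [rpow_sub_one hv.ne', div_eq_mul_inv]

lemma rpow_add_one_sub_rpow_le {p v : ℝ} (hp₀ : 0 ≤ p) (hp₁ : p ≤ 1) (hv : 0 < v) :
    (v + 1) ^ p - v ^ p ≤ p * v ^ (p - 1) := by
  have hbern := rpow_one_add_le_one_add_mul_self (by linarith [inv_pos.2 hv] : -1 ≤ v⁻¹) hp₀ hp₁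
  rw [rpow_add_one_eq_mul_rpow_one_add_inv hv, ← rpow_mul_inv hv]
  nlinarith [mul_le_mul_of_nonneg_left hbern (rpow_nonneg hv.le p)]

lemma mul_rpow_sub_one_le_rpow_add_one_sub_rpow {p v : ℝ} (hp : 1 ≤ p) (hv : 0 < v) :
    p * v ^ (p - 1) ≤ (v + 1) ^ p - v ^ p := by
  have hbern := one_add_mul_self_le_rpow_one_add (by linarith [inv_pos.2 hv] : -1 ≤ v⁻¹) hp
  rw [rpow_add_one_eq_mul_rpow_one_add_inv hv, ← rpow_mul_inv hv]
  nlinarith [mul_le_mul_of_nonneg_left hbern (rpow_nonneg hv.le p)]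

lemma rpow_add_one_sub_rpow_le_mul_rpow_add_one {p v : ℝ} (hp : 1 ≤ p) (hv : 0 ≤ v) :
    (v + 1) ^ p - v ^ p ≤ p * (v + 1) ^ (p - 1) := by
  have hw : 0 < v + 1 := by linarith
  have hs : -1 ≤ -(v + 1)⁻¹ := neg_le_neg (inv_le_one_of_one_le₀ (by linarith))
  have hbern := one_add_mul_self_le_rpow_one_add hs hp
  have hv_eq : v ^ p = (v + 1) ^ p * (1 + -(v + 1)⁻¹) ^ p := by
    rw [← mul_rpow hw.le (by linarith), mul_add, mul_neg, mul_inv_cancel₀ hw.ne']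
    ring_nf
  rw [hv_eq, ← rpow_mul_inv hw]
  nlinarith [mul_le_mul_of_nonneg_left hbern (rpow_nonneg hw.le p)]

end Real

noncomputable def kappaIntegrand (ν v : ℝ) : ℝ :=
  ((v + 1) ^ (2 * ν) - v ^ (2 * ν)) / v ^ (ν + 1)

lemma measurable_kappaIntegrand (ν : ℝ) : Measurable (kappaIntegrand ν) := by
  unfold kappaIntegrand
  fun_prop

lemma rpow_two_mul_sub_one_div_rpow_add_one {v : ℝ} (hv : 0 < v) (ν : ℝ) :
    v ^ (2 * ν - 1) / v ^ (ν + 1) = v ^ (ν - 2) := by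
  rw [← rpow_sub hv]
  ring_nf

lemma kappaIntegrand_nonneg {ν v : ℝ} (hν : 0 ≤ ν) (hv : 0 < v) : 0 ≤ kappaIntegrand ν v :=
  div_nonneg (sub_nonneg.2 (rpow_le_rpow hv.le (by linarith) (by positivity))) (by positivity)

lemma kappaIntegrand_le {ν v : ℝ} (hν₀ : 0 ≤ ν) (hν₁ : ν ≤ 1 / 2) (hv : 0 < v) :
    kappaIntegrand ν v ≤ 2 * ν * v ^ (ν - 2) := by
  rw [← rpow_two_mul_sub_one_div_rpow_add_one hv, ← mul_div_assoc]
  exact div_le_div_of_nonneg_right (rpow_add_one_sub_rpow_le (by linarith) (by linarith) hv)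
    (by positivity)

lemma le_kappaIntegrand {ν v : ℝ} (hν : 1 / 2 ≤ ν) (hv : 0 < v) :
    2 * ν * v ^ (ν - 2) ≤ kappaIntegrand ν v := by
  rw [← rpow_two_mul_sub_one_div_rpow_add_one hv, ← mul_div_assoc]
  exact div_le_div_of_nonneg_right (mul_rpow_sub_one_le_rpow_add_one_sub_rpow (by linarith) hv)
    (by positivity)

lemma kappaIntegrand_le_of_one_half_le {ν v : ℝ} (hν : 1 / 2 ≤ ν) (hv : 1 ≤ v) :
    kappaIntegrand ν v ≤ 2 * ν * 2 ^ (2 * ν - 1) * v ^ (ν - 2) := by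
  have hv₀ : 0 < v := by linarith
  have hmono : (v + 1) ^ (2 * ν - 1) ≤ 2 ^ (2 * ν - 1) * v ^ (2 * ν - 1) := by
    rw [← mul_rpow zero_le_two hv₀.le]
    exact rpow_le_rpow (by linarith) (by linarith) (by linarith)
  rw [← rpow_two_mul_sub_one_div_rpow_add_one hv₀, mul_assoc, ← mul_div_assoc, ← mul_div_assoc]
  refine div_le_div_of_nonneg_right ?_ (by positivity)
  calc (v + 1) ^ (2 * ν) - v ^ (2 * ν) ≤ 2 * ν * (v + 1) ^ (2 * ν - 1) :=
        rpow_add_one_sub_rpow_le_mul_rpow_add_one (by linarith) hv₀.le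
    _ ≤ 2 * ν * (2 ^ (2 * ν - 1) * v ^ (2 * ν - 1)) := by gcongr

lemma integrableOn_Ici_one_rpow {s : ℝ} (hs : s < -1) : IntegrableOn (fun v : ℝ ↦ v ^ s) (Ici 1) :=
  (integrableOn_Ici_iff_integrableOn_Ioi).2 (integrableOn_Ioi_rpow_of_lt hs one_pos)

lemma integral_Ici_one_rpow {s : ℝ} (hs : s < -1) : ∫ v in Ici (1 : ℝ), v ^ s = -1 / (s + 1) := by
  rw [integral_Ici_eq_integral_Ioi, integral_Ioi_rpow_of_lt hs one_pos, one_rpow, neg_div]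

lemma kappa_le {ν : ℝ} (hν₀ : 0 ≤ ν) (hν₁ : ν ≤ 1 / 2) : kappa ν ≤ 2 * ν / (1 - ν) := by
  have hs : ν - 2 < -1 := by linarith
  calc kappa ν ≤ ∫ v in Ici (1 : ℝ), 2 * ν * v ^ (ν - 2) := by
        refine integral_mono_of_nonneg ?_ ((integrableOn_Ici_one_rpow hs).const_mul _) ?_
        · filter_upwards [ae_restrict_mem measurableSet_Ici] with v (hv : 1 ≤ v)
          exact kappaIntegrand_nonneg hν₀ (by linarith)
        · filter_upwards [ae_restrict_mem measurableSet_Ici] with v (hv : 1 ≤ v)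
          exact kappaIntegrand_le hν₀ hν₁ (by linarith)
    _ = 2 * ν / (1 - ν) := by
        rw [integral_const_mul, integral_Ici_one_rpow hs, show ν - 2 + 1 = -(1 - ν) by ring,
          neg_div_neg_eq, mul_one_div]

lemma le_kappa {ν : ℝ} (hν₀ : 1 / 2 ≤ ν) (hν₁ : ν < 1) : 2 * ν / (1 - ν) ≤ kappa ν := by
  have hs : ν - 2 < -1 := by linarith
  have hint : IntegrableOn (kappaIntegrand ν) (Ici 1) := by
    refine Integrable.mono' ((integrableOn_Ici_one_rpow hs).const_mul (2 * ν * 2 ^ (2 * ν - 1)))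
      (measurable_kappaIntegrand ν).aestronglyMeasurable ?_
    filter_upwards [ae_restrict_mem measurableSet_Ici] with v (hv : 1 ≤ v)
    rw [norm_of_nonneg (kappaIntegrand_nonneg (by linarith) (by linarith))]
    exact kappaIntegrand_le_of_one_half_le hν₀ hv
  calc 2 * ν / (1 - ν) = ∫ v in Ici (1 : ℝ), 2 * ν * v ^ (ν - 2) := by
        rw [integral_const_mul, integral_Ici_one_rpow hs, show ν - 2 + 1 = -(1 - ν) by ring,
          neg_div_neg_eq, mul_one_div]
    _ ≤ kappa ν := by
        refine integral_mono_of_nonneg ?_ hint ?_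
        · filter_upwards [ae_restrict_mem measurableSet_Ici] with v (hv : 1 ≤ v)
          have : 0 ≤ v ^ (ν - 2) := rpow_nonneg (by linarith) _
          positivity
        · filter_upwards [ae_restrict_mem measurableSet_Ici] with v (hv : 1 ≤ v)
          exact le_kappaIntegrand hν₀ (by linarith)

lemma one_sub_mul_two_mul_div_one_sub {ν : ℝ} (hν : ν ≠ 1) :
    1 - ν * (2 * ν / (1 - ν)) = (1 - 2 * ν) * (1 + ν) / (1 - ν) := by
  have : 1 - ν ≠ 0 := sub_ne_zero.2 hν.symm
  field_simp
  ring

theorem stmt_8 :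
    kappa (1 / 2) = 2 ∧
    (∀ ν : ℝ, 0 < ν → ν < 1 / 2 → 0 < 1 - ν * kappa ν) ∧
    (∀ ν : ℝ, 1 / 2 < ν → ν < 1 → 1 - ν * kappa ν < 0) := by
  refine ⟨?_, fun ν hν₀ hν₁ ↦ ?_, fun ν hν₀ hν₁ ↦ ?_⟩
  · have h := le_antisymm (kappa_le (by norm_num) le_rfl) (le_kappa le_rfl (by norm_num))
    norm_num at h
    exact h
  · calc 0 < (1 - 2 * ν) * (1 + ν) / (1 - ν) := by
          apply div_pos (mul_pos _ _) _ <;> linarith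
      _ = 1 - ν * (2 * ν / (1 - ν)) := (one_sub_mul_two_mul_div_one_sub (by linarith)).symm
      _ ≤ 1 - ν * kappa ν := by gcongr; exact kappa_le hν₀.le hν₁.le
  · calc 1 - ν * kappa ν ≤ 1 - ν * (2 * ν / (1 - ν)) := by
          gcongr; exact le_kappa hν₀.le hν₁
      _ = (1 - 2 * ν) * (1 + ν) / (1 - ν) := one_sub_mul_two_mul_div_one_sub (by linarith)
      _ < 0 := div_neg_of_neg_of_pos (mul_neg_of_neg_of_pos (by linarith) (by linarith))
          (by linarith)
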